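/- There exist a complex Hilbert space H and bounded linear operators A and B on H such that: R(A) and R(B) are closed, R(A) = R(A*), R(B) = R(B*), R(AB) ⊆ R(B), and N(A) ⊆ N(AB), but R(AB) ≠ R((AB)*). (Such a pair exists on H = ℓ²(ℕ, ℂ) ⊕ ℓ²(ℕ, ℂ), with A the orthogonal projection onto the second summand and B a suitable unitary operator.) -/

import Mathlib

/-!
Take `A` the orthogonal projection onto the second summand of `ℓ² ⊕ ℓ²` and `B` the bilateral
shift, `(f, g) ↦ (g 0 :: f, tail g)`; both are EP. `B` is onto, so `R(AB) ⊆ R(B)`, and `B` maps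
the first summand `N(A)` into itself, so `N(A) ⊆ N(AB)`. But `AB (f, g) = (0, tail g)` has the
whole second summand as range, while `(AB)* = B⁻¹A` sends `(f, g)` to `(0, 0 :: g)`, whose second
component vanishes at `0`.
-/

open ContinuousLinearMap
open scoped lp

section EP

variable {𝕜 E : Type*} [RCLike 𝕜] [NormedAddCommGroup E] [InnerProductSpace 𝕜 E]

theorem LinearIsometryEquiv.range_coe_eq_top (U : E ≃ₗᵢ[𝕜] E) :
    LinearMap.range (U : E →L[𝕜] E).toLinearMap = ⊤ :=
  LinearMap.range_eq_top.mpr U.surjective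

variable [CompleteSpace E]

def IsEP (T : E →L[𝕜] E) : Prop :=
  IsClosed (Set.range T) ∧ LinearMap.range T.toLinearMap = LinearMap.range (adjoint T).toLinearMap

theorem IsStarProjection.isEP {P : E →L[𝕜] E} (hP : IsStarProjection P) : IsEP P :=
  ⟨hP.isIdempotentElem.isClosed_range, by rw [hP.isSelfAdjoint.adjoint_eq]⟩

theorem LinearIsometryEquiv.isEP (U : E ≃ₗᵢ[𝕜] E) : IsEP (U : E →L[𝕜] E) :=
  ⟨U.surjective.range_eq ▸ isClosed_univ,
    by rw [adjoint_eq_symm, U.range_coe_eq_top, U.symm.range_coe_eq_top]⟩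

end EP

@[ext]
theorem WithLp.prod_ext {p : ENNReal} {α β : Type*} {x y : WithLp p (α × β)}
    (h₁ : x.fst = y.fst) (h₂ : x.snd = y.snd) : x = y :=
  (WithLp.ext_iff p).mpr (Prod.ext h₁ h₂)

section SecondProjection

variable (𝕜 E F : Type*) [RCLike 𝕜] [NormedAddCommGroup E] [InnerProductSpace 𝕜 E]
  [NormedAddCommGroup F] [InnerProductSpace 𝕜 F]

noncomputable def WithLp.secondProjection : WithLp 2 (E × F) →L[𝕜] WithLp 2 (E × F) :=
  (prodContinuousLinearEquiv 2 𝕜 E F).symm.toContinuousLinearMap ∘L inr 𝕜 E F ∘L sndL 2 𝕜 E F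

variable {𝕜 E F}

@[simp]
theorem WithLp.secondProjection_apply (z : WithLp 2 (E × F)) :
    secondProjection 𝕜 E F z = toLp 2 (0, z.snd) := rfl

theorem WithLp.isStarProjection_secondProjection [CompleteSpace E] [CompleteSpace F] :
    IsStarProjection (secondProjection 𝕜 E F) := by
  refine ⟨ContinuousLinearMap.ext fun z => rfl, ?_⟩
  rw [isSelfAdjoint_iff_isSymmetric]
  intro x y
  simp [prod_inner_apply]

end SecondProjection

namespace lp

variable {𝕜 E : Type*} [RCLike 𝕜] [NormedAddCommGroup E] [InnerProductSpace 𝕜 E]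

def cons (a : E) (f : ℓ²(ℕ, E)) : ℓ²(ℕ, E) :=
  ⟨fun n => Nat.casesOn n a f, by
    refine memℓp_gen ((summable_nat_add_iff 1).mp ?_)
    exact (lp.memℓp f).summable (by norm_num)⟩

def tail (f : ℓ²(ℕ, E)) : ℓ²(ℕ, E) :=
  ⟨fun n => f (n + 1), memℓp_gen <| (summable_nat_add_iff 1).mpr <|
    (lp.memℓp f).summable (by norm_num)⟩

@[simp] theorem cons_apply_zero (a : E) (f : ℓ²(ℕ, E)) : cons a f 0 = a := rfl
@[simp] theorem cons_apply_succ (a : E) (f : ℓ²(ℕ, E)) (n : ℕ) : cons a f (n + 1) = f n := rfl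
@[simp] theorem tail_apply (f : ℓ²(ℕ, E)) (n : ℕ) : tail f n = f (n + 1) := rfl

@[simp] theorem tail_zero : tail (0 : ℓ²(ℕ, E)) = 0 := rfl
@[simp] theorem tail_cons (a : E) (f : ℓ²(ℕ, E)) : tail (cons a f) = f := rfl

@[simp] theorem cons_tail (f : ℓ²(ℕ, E)) : cons (f 0) (tail f) = f := by
  ext (_ | n) <;> rfl

theorem inner_eq_inner_zero_add_inner_tail (f g : ℓ²(ℕ, E)) :
    inner 𝕜 f g = inner 𝕜 (f 0) (g 0) + inner 𝕜 (tail f) (tail g) := by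
  rw [lp.inner_eq_tsum, lp.inner_eq_tsum, (lp.summable_inner (𝕜 := 𝕜) f g).tsum_eq_zero_add]
  rfl

/- Reading `(f, g)` as the two-sided sequence `(…, g 1, g 0 | f 0, f 1, …) ∈ ℓ²(ℤ, E)`, this is
the bilateral shift to the right. -/
variable (𝕜 E) in
noncomputable def bilateralShift :
    WithLp 2 (ℓ²(ℕ, E) × ℓ²(ℕ, E)) ≃ₗᵢ[𝕜] WithLp 2 (ℓ²(ℕ, E) × ℓ²(ℕ, E)) :=
  LinearEquiv.isometryOfInner
    { toFun z := WithLp.toLp 2 (cons (z.snd 0) z.fst, tail z.snd)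
      invFun z := WithLp.toLp 2 (tail z.fst, cons (z.fst 0) z.snd)
      map_add' z w := by ext (_ | n) <;> simp
      map_smul' c z := by ext (_ | n) <;> simp
      left_inv z := by ext <;> simp
      right_inv z := by ext <;> simp }
    fun z w => by
      simp only [LinearEquiv.coe_mk, LinearMap.coe_mk, AddHom.coe_mk, WithLp.prod_inner_apply,
        WithLp.ofLp_fst, WithLp.ofLp_snd]
      rw [inner_eq_inner_zero_add_inner_tail (cons _ _), inner_eq_inner_zero_add_inner_tail z.snd]
      simp only [cons_apply_zero, tail_cons]
      ring

@[simp]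
theorem bilateralShift_apply (z : WithLp 2 (ℓ²(ℕ, E) × ℓ²(ℕ, E))) :
    bilateralShift 𝕜 E z = WithLp.toLp 2 (cons (z.snd 0) z.fst, tail z.snd) := rfl

@[simp]
theorem bilateralShift_symm_apply (z : WithLp 2 (ℓ²(ℕ, E) × ℓ²(ℕ, E))) :
    (bilateralShift 𝕜 E).symm z = WithLp.toLp 2 (tail z.fst, cons (z.fst 0) z.snd) := rfl

local notation "P" => WithLp.secondProjection 𝕜 ℓ²(ℕ, E) ℓ²(ℕ, E)
local notation "S" => (bilateralShift 𝕜 E : WithLp 2 (ℓ²(ℕ, E) × ℓ²(ℕ, E)) →L[𝕜] _)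

theorem ker_secondProjection_le_ker_comp_bilateralShift :
    LinearMap.ker (P).toLinearMap ≤ LinearMap.ker (P ∘L S).toLinearMap := by
  intro z hz
  have hz : z.snd = 0 := congrArg WithLp.snd hz
  ext n <;> simp [hz]

variable [CompleteSpace E]

theorem adjoint_secondProjection_comp_bilateralShift_apply (z : WithLp 2 (ℓ²(ℕ, E) × ℓ²(ℕ, E))) :
    adjoint (P ∘L S) z = WithLp.toLp 2 (0, cons 0 z.snd) := by
  rw [adjoint_comp, WithLp.isStarProjection_secondProjection.isSelfAdjoint.adjoint_eq,
    LinearIsometryEquiv.adjoint_eq_symm]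
  ext n <;> simp

theorem range_secondProjection_comp_bilateralShift_ne_range_adjoint [Nontrivial E] :
    LinearMap.range (P ∘L S).toLinearMap ≠ LinearMap.range (adjoint (P ∘L S)).toLinearMap := by
  obtain ⟨v, hv⟩ := exists_ne (0 : E)
  intro h
  have hmem : WithLp.toLp 2 (0, lp.single 2 0 v) ∈ LinearMap.range (P ∘L S).toLinearMap :=
    ⟨WithLp.toLp 2 (0, lp.single 2 1 v), by ext (_ | n) <;> simp [lp.single_apply]⟩
  obtain ⟨z, hz⟩ := h ▸ hmem
  rw [coe_coe, adjoint_secondProjection_comp_bilateralShift_apply] at hz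
  exact hv (by simpa using congrArg (fun w => w.snd 0) hz.symm)

end lp

theorem stmt17 :
    ∃ A B : WithLp 2 (lp (fun _ : ℕ => ℂ) 2 × lp (fun _ : ℕ => ℂ) 2) →L[ℂ]
        WithLp 2 (lp (fun _ : ℕ => ℂ) 2 × lp (fun _ : ℕ => ℂ) 2),
      IsClosed (Set.range A) ∧ IsClosed (Set.range B) ∧
      LinearMap.range A.toLinearMap = LinearMap.range (ContinuousLinearMap.adjoint A).toLinearMap ∧
      LinearMap.range B.toLinearMap = LinearMap.range (ContinuousLinearMap.adjoint B).toLinearMap ∧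
      LinearMap.range (A ∘L B).toLinearMap ≤ LinearMap.range B.toLinearMap ∧
      LinearMap.ker A.toLinearMap ≤ LinearMap.ker (A ∘L B).toLinearMap ∧
      LinearMap.range (A ∘L B).toLinearMap ≠ LinearMap.range (ContinuousLinearMap.adjoint (A ∘L B)).toLinearMap := by
  obtain ⟨hA_closed, hA_range⟩ :=
    (WithLp.isStarProjection_secondProjection (𝕜 := ℂ) (E := ℓ²(ℕ, ℂ)) (F := ℓ²(ℕ, ℂ))).isEP
  obtain ⟨hB_closed, hB_range⟩ := (lp.bilateralShift ℂ ℂ).isEP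
  exact ⟨_, _, hA_closed, hB_closed, hA_range, hB_range,
    (lp.bilateralShift ℂ ℂ).range_coe_eq_top ▸ le_top,
    lp.ker_secondProjection_le_ker_comp_bilateralShift,
    lp.range_secondProjection_comp_bilateralShift_ne_range_adjoint⟩
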